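/- Construction of periodic points: Let X be a (real or complex) infinite-dimensional separable Banach space and let A be a densely defined linear operator in X such that every power A^n (n ∈ ℕ) is a closed operator. Suppose there exist a set Y ⊆ C^∞(A) dense in X and a mapping B : Y → Y such that ABf = f for every f ∈ Y, and for a given f ∈ Y there exist α ∈ (0,1) and c > 0 with max(‖A^n f‖, ‖B^n f‖) ≤ c·α^n for all n ∈ ℕ. Then for every N ∈ ℕ the series f_N := Σ_{m=1}^∞ A^{mN}f + f + Σ_{m=1}^∞ B^{mN}f converges in X, f_N ∈ D(A^N) with A^N f_N = f_N (i.e., f_N is an N-periodic point of A), and ‖f_N − f‖ ≤ 2c·α^N/(1 − α^N); in particular f_N → f as N → ∞. -/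

import Mathlib

open Filter Topology TopologicalSpace

/-- The domain of the `n`-th power of the operator `A` with domain `D`:
`x ∈ D(Aⁿ)` iff `Aᵏx ∈ D(A)` for all `k < n`. -/
def opDom {X : Type*} (A : X → X) (D : Set X) (n : ℕ) : Set X :=
  {x | ∀ k < n, A^[k] x ∈ D}

/-- `C^∞(A) = ⋂ₙ D(Aⁿ)`. -/
def opCinf {X : Type*} (A : X → X) (D : Set X) : Set X :=
  {x | ∀ k : ℕ, A^[k] x ∈ D}

/-- `A` is linear on the subspace `D`. -/
def IsLinearOn (𝕜 : Type*) {X : Type*} [RCLike 𝕜] [NormedAddCommGroup X]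
    [NormedSpace 𝕜 X] (A : X → X) (D : Set X) : Prop :=
  (∀ x ∈ D, ∀ y ∈ D, A (x + y) = A x + A y) ∧
  (∀ (c : 𝕜), ∀ x ∈ D, A (c • x) = c • A x)

/-- The `n`-th power of `A` (with domain `D`) is a closed operator:
its graph is closed in `X × X`. -/
def ClosedPower {X : Type*} [NormedAddCommGroup X] (A : X → X) (D : Set X)
    (n : ℕ) : Prop :=
  IsClosed {p : X × X | p.1 ∈ opDom A D n ∧ p.2 = A^[n] p.1}

/-- A hypercyclic vector for `A`: a nonzero `f ∈ C^∞(A)` with dense orbit. -/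
def HypercyclicVec {X : Type*} [NormedAddCommGroup X] (A : X → X) (D : Set X)
    (f : X) : Prop :=
  f ∈ opCinf A D ∧ f ≠ 0 ∧ Dense (Set.range fun n : ℕ => A^[n] f)

/-- `A` (with domain `D`) is hypercyclic. -/
def HypercyclicOp {X : Type*} [NormedAddCommGroup X] (A : X → X) (D : Set X) :
    Prop :=
  ∃ f, HypercyclicVec A D f

/-- `f` is a periodic point of `A`: `f ∈ D(A^N)` and `A^N f = f` for some `N ≥ 1`. -/
def PeriodicPt {X : Type*} (A : X → X) (D : Set X) (f : X) : Prop :=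
  ∃ N : ℕ, 0 < N ∧ f ∈ opDom A D N ∧ A^[N] f = f

/-- `A` (with domain `D`) is chaotic: hypercyclic with a dense set of periodic
points. -/
def ChaoticOp {X : Type*} [NormedAddCommGroup X] (A : X → X) (D : Set X) : Prop :=
  HypercyclicOp A D ∧ Dense {f | PeriodicPt A D f}

/-! The orbit `…, B^{2N} f, B^N f, f, A^N f, A^{2N} f, …` is shifted by one step by `A^N`,
because `AB = I` on `Y`; its two geometric tails converge, so its sum is fixed by `A^N`
once `A^N` is passed through the series, which the closedness of `A^N` allows. -/

section OperatorPowers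

variable {X : Type*} {A : X → X} {D : Set X}

lemma opDom_anti {k n : ℕ} (hkn : k ≤ n) : opDom A D n ⊆ opDom A D k :=
  fun _ hx j hj => hx j (hj.trans_le hkn)

lemma opCinf_subset_opDom (n : ℕ) : opCinf A D ⊆ opDom A D n :=
  fun _ hx k _ => hx k

lemma iterate_mem_opCinf {x : X} (hx : x ∈ opCinf A D) (k : ℕ) :
    A^[k] x ∈ opCinf A D := fun j => by
  rw [← Function.iterate_add_apply]
  exact hx (j + k)

end OperatorPowers

section LinearOperatorPowers

variable {𝕜 X : Type*} [RCLike 𝕜] [NormedAddCommGroup X] [NormedSpace 𝕜 X]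
  {D : Submodule 𝕜 X} {A : X → X}

namespace IsLinearOn

variable (hlin : IsLinearOn 𝕜 A (D : Set X))
include hlin

lemma map_zero : A 0 = 0 := by
  simpa using hlin.2 0 0 D.zero_mem

lemma zero_mem_opDom (n : ℕ) : (0 : X) ∈ opDom A (D : Set X) n := fun k _ => by
  rw [Function.iterate_fixed hlin.map_zero]
  exact D.zero_mem

lemma iterate_add {n : ℕ} {x y : X} (hx : x ∈ opDom A (D : Set X) n)
    (hy : y ∈ opDom A (D : Set X) n) : A^[n] (x + y) = A^[n] x + A^[n] y := by
  induction n with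
  | zero => rfl
  | succ n ih =>
    simp only [Function.iterate_succ_apply']
    rw [ih (opDom_anti n.le_succ hx) (opDom_anti n.le_succ hy)]
    exact hlin.1 _ (hx n n.lt_succ_self) _ (hy n n.lt_succ_self)

lemma add_mem_opDom {n : ℕ} {x y : X} (hx : x ∈ opDom A (D : Set X) n)
    (hy : y ∈ opDom A (D : Set X) n) : x + y ∈ opDom A (D : Set X) n := fun k hk => by
  rw [hlin.iterate_add (opDom_anti hk.le hx) (opDom_anti hk.le hy)]
  exact D.add_mem (hx k hk) (hy k hk)

lemma sum_mem_opDom_and_iterate_sum {ι : Type*} {n : ℕ} (s : Finset ι) {g : ι → X}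
    (hg : ∀ i ∈ s, g i ∈ opDom A (D : Set X) n) :
    ∑ i ∈ s, g i ∈ opDom A (D : Set X) n ∧ A^[n] (∑ i ∈ s, g i) = ∑ i ∈ s, A^[n] (g i) := by
  induction s using Finset.cons_induction with
  | empty => exact ⟨hlin.zero_mem_opDom n, Function.iterate_fixed hlin.map_zero n⟩
  | cons a s ha ih =>
    obtain ⟨hs, hsum⟩ := ih fun i hi => hg i (Finset.mem_cons_of_mem hi)
    have hga := hg a (Finset.mem_cons_self a s)
    simp only [Finset.sum_cons]
    exact ⟨hlin.add_mem_opDom hga hs, by rw [hlin.iterate_add hga hs, hsum]⟩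

lemma hasSum_iterate {ι : Type*} {n : ℕ} (hcl : ClosedPower A (D : Set X) n) {g : ι → X}
    {x y : X} (hg : ∀ i, g i ∈ opDom A (D : Set X) n) (hx : HasSum g x)
    (hy : HasSum (fun i => A^[n] (g i)) y) : x ∈ opDom A (D : Set X) n ∧ A^[n] x = y := by
  have hpartial : ∀ s : Finset ι, (∑ i ∈ s, g i, ∑ i ∈ s, A^[n] (g i)) ∈
      {p : X × X | p.1 ∈ opDom A (D : Set X) n ∧ p.2 = A^[n] p.1} := fun s =>
    let h := hlin.sum_mem_opDom_and_iterate_sum s fun i _ => hg i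
    ⟨h.1, h.2.symm⟩
  obtain ⟨hxD, hxy⟩ := hcl.mem_of_tendsto (hx.prodMk_nhds hy) (Eventually.of_forall hpartial)
  exact ⟨hxD, hxy.symm⟩

end IsLinearOn

end LinearOperatorPowers

lemma iterate_apply_iterate_of_leftInvOn {X : Type*} {A B : X → X} {Y : Set X}
    (hBmaps : Set.MapsTo B Y Y) (h1 : ∀ f ∈ Y, A (B f) = f) {g : X} (hg : g ∈ Y) (k : ℕ) :
    A^[k] (B^[k] g) = g := by
  induction k with
  | zero => rfl
  | succ n ih =>
    rw [Function.iterate_succ_apply A, Function.iterate_succ_apply' B,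
      h1 _ ((hBmaps.iterate n) hg), ih]

lemma summable_and_norm_tsum_le_geometric {X : Type*} [NormedAddCommGroup X] [CompleteSpace X]
    {g : ℕ → X} {c r : ℝ} (hr0 : 0 ≤ r) (hr1 : r < 1) (hg : ∀ m, ‖g m‖ ≤ c * r ^ (m + 1)) :
    Summable g ∧ ‖∑' m, g m‖ ≤ c * r / (1 - r) := by
  have hgeom : HasSum (fun m : ℕ => c * r ^ (m + 1)) (c * r / (1 - r)) := by
    simpa only [pow_succ', ← mul_assoc, div_eq_mul_inv] using
      (hasSum_geometric_of_lt_one hr0 hr1).mul_left (c * r)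
  exact ⟨hgeom.summable.of_norm_bounded hg, tsum_of_norm_bounded hgeom hg⟩

lemma norm_apply_succ_mul_le {X : Type*} [NormedAddCommGroup X] {u : ℕ → X} {c α : ℝ}
    (hu : ∀ n : ℕ, 0 < n → ‖u n‖ ≤ c * α ^ n) {N : ℕ} (hN : 0 < N) (m : ℕ) :
    ‖u ((m + 1) * N)‖ ≤ c * (α ^ N) ^ (m + 1) := by
  rw [← pow_mul, mul_comm N]
  exact hu _ (by positivity)

lemma tendsto_two_mul_pow_div_one_sub_pow (c : ℝ) {α : ℝ} (hα0 : 0 ≤ α) (hα1 : α < 1) :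
    Tendsto (fun N : ℕ => 2 * c * α ^ N / (1 - α ^ N)) atTop (𝓝 0) := by
  have hpow := tendsto_pow_atTop_nhds_zero_of_lt_one hα0 hα1
  have hlim : Tendsto (fun N : ℕ => 2 * c * α ^ N / (1 - α ^ N)) atTop
      (𝓝 (2 * c * 0 / (1 - 0))) :=
    (hpow.const_mul _).div (tendsto_const_nhds.sub hpow) (by norm_num)
  simpa using hlim

noncomputable def periodicSeries {X : Type*} [NormedAddCommGroup X] (A B : X → X) (f : X)
    (N : ℕ) : X :=
  (∑' m : ℕ, A^[(m + 1) * N] f) + f + ∑' m : ℕ, B^[(m + 1) * N] f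

lemma norm_periodicSeries_sub_le {X : Type*} [NormedAddCommGroup X] (A B : X → X) (f : X)
    (N : ℕ) : ‖periodicSeries A B f N - f‖ ≤
      ‖∑' m : ℕ, A^[(m + 1) * N] f‖ + ‖∑' m : ℕ, B^[(m + 1) * N] f‖ := by
  rw [periodicSeries, add_sub_right_comm, add_sub_cancel_right]
  exact norm_add_le _ _

lemma IsLinearOn.periodicSeries_mem_opDom_and_iterate_eq {𝕜 X : Type*} [RCLike 𝕜]
    [NormedAddCommGroup X] [NormedSpace 𝕜 X] {D : Submodule 𝕜 X} {A B : X → X} {Y : Set X}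
    (hlin : IsLinearOn 𝕜 A (D : Set X)) {N : ℕ} (hcl : ClosedPower A (D : Set X) N)
    (hYsub : Y ⊆ opCinf A (D : Set X)) (hBmaps : Set.MapsTo B Y Y)
    (h1 : ∀ f ∈ Y, A (B f) = f) {f : X} (hf : f ∈ Y)
    (hSA : Summable fun m : ℕ => A^[(m + 1) * N] f)
    (hSB : Summable fun m : ℕ => B^[(m + 1) * N] f) :
    periodicSeries A B f N ∈ opDom A (D : Set X) N ∧
      A^[N] (periodicSeries A B f N) = periodicSeries A B f N := by
  have hfD : f ∈ opDom A (D : Set X) N := opCinf_subset_opDom N (hYsub hf)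
  have hBf : ∀ k, B^[k] f ∈ Y := fun k => hBmaps.iterate k hf
  have hAshift : HasSum (fun m : ℕ => A^[N] (A^[(m + 1) * N] f))
      ((∑' m : ℕ, A^[(m + 1) * N] f) - A^[N] f) := by
    have hshift : (fun m : ℕ => A^[N] (A^[(m + 1) * N] f)) = fun m => A^[(m + 1 + 1) * N] f :=
      funext fun m => by rw [← Function.iterate_add_apply]; ring_nf
    rw [hshift]
    simpa only [Finset.sum_range_one, zero_add, one_mul] using
      (hasSum_nat_add_iff' 1).mpr hSA.hasSum
  -- `A^N` undoes one step of `B^N`, so it shifts the `B`-tail back onto `f`.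
  have hBshift : HasSum (fun m : ℕ => A^[N] (B^[(m + 1) * N] f))
      (f + ∑' m : ℕ, B^[(m + 1) * N] f) := by
    have hshift : (fun m : ℕ => A^[N] (B^[(m + 1) * N] f)) = fun m => B^[m * N] f :=
      funext fun m => by
        rw [add_mul, one_mul, add_comm, Function.iterate_add_apply,
          iterate_apply_iterate_of_leftInvOn hBmaps h1 (hBf (m * N)) N]
    rw [hshift]
    simpa only [zero_mul, Function.iterate_zero, id] using
      HasSum.zero_add (f := fun m : ℕ => B^[m * N] f) hSB.hasSum
  obtain ⟨hAD, hAeq⟩ := hlin.hasSum_iterate hcl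
    (fun m => opCinf_subset_opDom N (iterate_mem_opCinf (hYsub hf) _)) hSA.hasSum hAshift
  obtain ⟨hBD, hBeq⟩ := hlin.hasSum_iterate hcl
    (fun m => opCinf_subset_opDom N (hYsub (hBf _))) hSB.hasSum hBshift
  have hAfD := hlin.add_mem_opDom hAD hfD
  refine ⟨hlin.add_mem_opDom hAfD hBD, ?_⟩
  rw [periodicSeries, hlin.iterate_add hAfD hBD, hlin.iterate_add hAD hfD, hAeq, hBeq]
  abel

theorem construction_of_periodic_points_general
    {𝕜 X : Type*} [RCLike 𝕜] [NormedAddCommGroup X] [NormedSpace 𝕜 X]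
    [CompleteSpace X]
    (D : Submodule 𝕜 X) (A : X → X)
    (hlin : IsLinearOn 𝕜 A (D : Set X))
    (hcl : ∀ n : ℕ, 0 < n → ClosedPower A (D : Set X) n)
    (Y : Set X) (hYsub : Y ⊆ opCinf A (D : Set X))
    (B : X → X) (hBmaps : Set.MapsTo B Y Y)
    (h1 : ∀ f ∈ Y, A (B f) = f)
    (f : X) (hf : f ∈ Y) (α c : ℝ) (hα : α ∈ Set.Ioo (0 : ℝ) 1)
    (h2 : ∀ n : ℕ, 0 < n → max ‖A^[n] f‖ ‖B^[n] f‖ ≤ c * α ^ n) :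
    (∀ N : ℕ, 0 < N →
      Summable (fun m : ℕ => A^[(m + 1) * N] f) ∧
      Summable (fun m : ℕ => B^[(m + 1) * N] f) ∧
      ((∑' m : ℕ, A^[(m + 1) * N] f) + f + ∑' m : ℕ, B^[(m + 1) * N] f) ∈ opDom A (D : Set X) N ∧
      A^[N] ((∑' m : ℕ, A^[(m + 1) * N] f) + f + ∑' m : ℕ, B^[(m + 1) * N] f) = (∑' m : ℕ, A^[(m + 1) * N] f) + f + ∑' m : ℕ, B^[(m + 1) * N] f ∧
      ‖((∑' m : ℕ, A^[(m + 1) * N] f) + f + ∑' m : ℕ, B^[(m + 1) * N] f) - f‖ ≤ 2 * c * α ^ N / (1 - α ^ N)) ∧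
    Filter.Tendsto (fun N : ℕ => (∑' m : ℕ, A^[(m + 1) * N] f) + f + ∑' m : ℕ, B^[(m + 1) * N] f)
      Filter.atTop (nhds f) := by
  obtain ⟨hα0, hα1⟩ := hα
  have hperiodic : ∀ N : ℕ, 0 < N →
      Summable (fun m : ℕ => A^[(m + 1) * N] f) ∧
      Summable (fun m : ℕ => B^[(m + 1) * N] f) ∧
      periodicSeries A B f N ∈ opDom A (D : Set X) N ∧
      A^[N] (periodicSeries A B f N) = periodicSeries A B f N ∧
      ‖periodicSeries A B f N - f‖ ≤ 2 * c * α ^ N / (1 - α ^ N) := fun N hN => by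
    have hr1 : α ^ N < 1 := pow_lt_one₀ hα0.le hα1 hN.ne'
    obtain ⟨hSA, hnA⟩ := summable_and_norm_tsum_le_geometric (pow_nonneg hα0.le N) hr1
      (norm_apply_succ_mul_le (fun n hn => (le_max_left _ _).trans (h2 n hn)) hN)
    obtain ⟨hSB, hnB⟩ := summable_and_norm_tsum_le_geometric (pow_nonneg hα0.le N) hr1
      (norm_apply_succ_mul_le (fun n hn => (le_max_right _ _).trans (h2 n hn)) hN)
    obtain ⟨hmem, hfixed⟩ :=
      hlin.periodicSeries_mem_opDom_and_iterate_eq (hcl N hN) hYsub hBmaps h1 hf hSA hSB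
    refine ⟨hSA, hSB, hmem, hfixed, (norm_periodicSeries_sub_le A B f N).trans ?_⟩
    rw [mul_assoc 2 c, mul_div_assoc, two_mul]
    exact add_le_add hnA hnB
  refine ⟨hperiodic, tendsto_iff_norm_sub_tendsto_zero.mpr ?_⟩
  refine squeeze_zero' (Eventually.of_forall fun N => norm_nonneg _) ?_
    (tendsto_two_mul_pow_div_one_sub_pow c hα0.le hα1)
  filter_upwards [eventually_gt_atTop 0] with N hN using (hperiodic N hN).2.2.2.2

/-- **Construction of periodic points.** -/
theorem construction_of_periodic_points
    {𝕜 X : Type*} [RCLike 𝕜] [NormedAddCommGroup X] [NormedSpace 𝕜 X]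
    [CompleteSpace X] [SeparableSpace X]
    (hinfdim : ¬ FiniteDimensional 𝕜 X)
    (D : Submodule 𝕜 X) (A : X → X)
    (hlin : IsLinearOn 𝕜 A (D : Set X))
    (hdd : Dense (D : Set X))
    (hcl : ∀ n : ℕ, 0 < n → ClosedPower A (D : Set X) n)
    (Y : Set X) (hYsub : Y ⊆ opCinf A (D : Set X)) (hYdense : Dense Y)
    (B : X → X) (hBmaps : Set.MapsTo B Y Y)
    (h1 : ∀ f ∈ Y, A (B f) = f)
    (f : X) (hf : f ∈ Y) (α c : ℝ) (hα : α ∈ Set.Ioo (0 : ℝ) 1) (hc : 0 < c)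
    (h2 : ∀ n : ℕ, 0 < n → max ‖A^[n] f‖ ‖B^[n] f‖ ≤ c * α ^ n) :
    (∀ N : ℕ, 0 < N →
      Summable (fun m : ℕ => A^[(m + 1) * N] f) ∧
      Summable (fun m : ℕ => B^[(m + 1) * N] f) ∧
      ((∑' m : ℕ, A^[(m + 1) * N] f) + f + ∑' m : ℕ, B^[(m + 1) * N] f) ∈ opDom A (D : Set X) N ∧
      A^[N] ((∑' m : ℕ, A^[(m + 1) * N] f) + f + ∑' m : ℕ, B^[(m + 1) * N] f) = (∑' m : ℕ, A^[(m + 1) * N] f) + f + ∑' m : ℕ, B^[(m + 1) * N] f ∧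
      ‖((∑' m : ℕ, A^[(m + 1) * N] f) + f + ∑' m : ℕ, B^[(m + 1) * N] f) - f‖ ≤ 2 * c * α ^ N / (1 - α ^ N)) ∧
    Filter.Tendsto (fun N : ℕ => (∑' m : ℕ, A^[(m + 1) * N] f) + f + ∑' m : ℕ, B^[(m + 1) * N] f)
      Filter.atTop (nhds f) :=
  construction_of_periodic_points_general D A hlin hcl Y hYsub B hBmaps h1 f hf α c hα h2
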